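/- Under assumptions F1 and F2, there exists C > 0 such that for all u,v ∈ [0,1], ‖π_u − π_v‖_V ≤ C|u−v|^κ, where π_u denotes the unique invariant probability of Q_u. -/

import Mathlib

open MeasureTheory ProbabilityTheory Filter Set
open scoped ENNReal NNReal

noncomputable section

variable {E : Type*} [MeasurableSpace E]

/-- `V`-norm distance `‖μ − ν‖_V = sup{|∫ f dμ − ∫ f dν| : f measurable, |f| ≤ V}`. -/
noncomputable def vDist (V : E → ℝ) (μ ν : Measure E) : ℝ :=
  ⨆ f : {f : E → ℝ // Measurable f ∧ ∀ x, |f x| ≤ V x},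
    |(∫ x, f.1 x ∂μ) - ∫ x, f.1 x ∂ν|

/-- `m`-step kernel obtained by iterating `Q`. -/
noncomputable def mstep (Q : E → Measure E) : ℕ → E → Measure E
  | 0 => fun x => Measure.dirac x
  | (m+1) => fun x => (Q x).bind (mstep Q m)

/-- Composition `δ_x Q_{u₁}⋯Q_{u_m}` of kernels along a finite list of times. -/
noncomputable def seqStep (Q : ℝ → E → Measure E) : List ℝ → E → Measure E
  | [], x => Measure.dirac x
  | (u :: us), x => (Q u x).bind (seqStep Q us)

/-!
Fix `u, v` and let `P = Q_v ^ m`. By F1, `P` has a geometric drift towards `{V ≤ R}` and a Doeblin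
minorization on it, so by the weighted Harris theorem (Hairer–Mattingly) it is a contraction with
rate `α < 1` for the distance `vDist (1 + β V)`, for suitable `β > 0`. Hence the distance from any
law `μ` to the invariant law `π_v` is at most `vDist (1 + β V) μ (μ P) / (1 - α)`. For `μ = π_u`
we have `π_u = π_u Q_u`, so the displacement `π_u - π_u Q_v ^ m` telescopes into `m` copies of
`π_u Q_u - π_u Q_v` pushed through powers of `Q_v`, which enlarge the weight by at most a factor
`K` per step; by F2 each copy is at most `(1 + β) |u - v| ^ κ ∫ Ṽ dπ_u`.
-/

section vDist

variable {W : E → ℝ} {μ₁ μ₂ μ₃ : Measure E}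

lemma bddAbove_vDist (h₁ : Integrable W μ₁) (h₂ : Integrable W μ₂) :
    BddAbove (range fun f : {f : E → ℝ // Measurable f ∧ ∀ x, |f x| ≤ W x} =>
      |(∫ x, f.1 x ∂μ₁) - ∫ x, f.1 x ∂μ₂|) := by
  refine ⟨(∫ x, W x ∂μ₁) + ∫ x, W x ∂μ₂, ?_⟩
  rintro _ ⟨f, rfl⟩
  have hf₁ := norm_integral_le_of_norm_le (f := f.1) h₁ (.of_forall f.2.2)
  have hf₂ := norm_integral_le_of_norm_le (f := f.1) h₂ (.of_forall f.2.2)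
  exact (abs_sub _ _).trans (add_le_add hf₁ hf₂)

lemma abs_integral_sub_le_vDist (h₁ : Integrable W μ₁) (h₂ : Integrable W μ₂) {f : E → ℝ}
    (hf : Measurable f) (hfW : ∀ x, |f x| ≤ W x) :
    |(∫ x, f x ∂μ₁) - ∫ x, f x ∂μ₂| ≤ vDist W μ₁ μ₂ :=
  le_ciSup (bddAbove_vDist h₁ h₂) ⟨f, hf, hfW⟩

lemma vDist_le {a : ℝ} (ha : 0 ≤ a)
    (h : ∀ f : E → ℝ, Measurable f → (∀ x, |f x| ≤ W x) →
      |(∫ x, f x ∂μ₁) - ∫ x, f x ∂μ₂| ≤ a) :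
    vDist W μ₁ μ₂ ≤ a :=
  Real.iSup_le (fun f => h f.1 f.2.1 f.2.2) ha

lemma vDist_nonneg : 0 ≤ vDist W μ₁ μ₂ :=
  Real.iSup_nonneg fun _ => abs_nonneg _

lemma vDist_triangle (h₁ : Integrable W μ₁) (h₂ : Integrable W μ₂) (h₃ : Integrable W μ₃) :
    vDist W μ₁ μ₃ ≤ vDist W μ₁ μ₂ + vDist W μ₂ μ₃ :=
  vDist_le (add_nonneg vDist_nonneg vDist_nonneg) fun f hf hfW =>
    (abs_sub_le _ (∫ x, f x ∂μ₂) _).trans <|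
      add_le_add (abs_integral_sub_le_vDist h₁ h₂ hf hfW) (abs_integral_sub_le_vDist h₂ h₃ hf hfW)

lemma vDist_le_mul_vDist {W' : E → ℝ} {c : ℝ} (hc : 0 < c) (hW : ∀ x, W x ≤ c * W' x)
    (h₁ : Integrable W' μ₁) (h₂ : Integrable W' μ₂) :
    vDist W μ₁ μ₂ ≤ c * vDist W' μ₁ μ₂ := by
  refine vDist_le (mul_nonneg hc.le vDist_nonneg) fun f hf hfW => ?_
  have hfW' : ∀ x, |c⁻¹ * f x| ≤ W' x := fun x => by
    rw [abs_mul, abs_of_pos (inv_pos.2 hc), inv_mul_le_iff₀ hc]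
    exact (hfW x).trans (hW x)
  have := abs_integral_sub_le_vDist h₁ h₂ (hf.const_mul c⁻¹) hfW'
  rw [integral_const_mul, integral_const_mul, ← mul_sub, abs_mul, abs_of_pos (inv_pos.2 hc),
    inv_mul_le_iff₀ hc] at this
  exact this

lemma exists_abs_sub_le_of_sub_le {X : Type*} {g w : X → ℝ} {α : ℝ}
    (hg : ∀ x y, g x - g y ≤ α * (w x + w y)) : ∃ c, ∀ x, |g x - c| ≤ α * w x := by
  rcases isEmpty_or_nonempty X with hX | hX
  · exact ⟨0, fun x => isEmptyElim x⟩
  obtain ⟨y₀⟩ := id hX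
  have hbdd : BddAbove (range fun x => g x - α * w x) :=
    ⟨g y₀ + α * w y₀, by rintro _ ⟨x, rfl⟩; linarith [hg x y₀]⟩
  refine ⟨⨆ x, (g x - α * w x), fun x => abs_sub_le_iff.2 ⟨?_, ?_⟩⟩
  · linarith [le_ciSup hbdd x]
  · exact sub_le_iff_le_add.2 <| ciSup_le fun y => by linarith [hg y x]

lemma abs_integral_sub_le_mul_vDist [IsProbabilityMeasure μ₁] [IsProbabilityMeasure μ₂]
    (h₁ : Integrable W μ₁) (h₂ : Integrable W μ₂) {g : E → ℝ} (hg : Measurable g) {α : ℝ}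
    (hα : 0 < α) (hgW : ∀ x y, g x - g y ≤ α * (W x + W y)) :
    |(∫ x, g x ∂μ₁) - ∫ x, g x ∂μ₂| ≤ α * vDist W μ₁ μ₂ := by
  -- `g` is within `α W` of a constant, and constants cancel between probability measures.
  obtain ⟨c, hc⟩ := exists_abs_sub_le_of_sub_le hgW
  set f := fun x => α⁻¹ * (g x - c)
  have hfW : ∀ x, |f x| ≤ W x := fun x => by
    rw [abs_mul, abs_of_pos (inv_pos.2 hα), inv_mul_le_iff₀ hα]
    exact hc x
  have hf : Measurable f := (hg.sub_const c).const_mul _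
  have hgf : ∀ μ [IsProbabilityMeasure μ], Integrable W μ →
      ∫ x, g x ∂μ = c + α * ∫ x, f x ∂μ := fun μ _ hμ => by
    have hgcf : (fun x => g x) = fun x => c + α * f x := funext fun x => by
      simp only [f]
      field_simp
      ring
    have hfi : Integrable f μ := hμ.mono' hf.aestronglyMeasurable (.of_forall hfW)
    rw [hgcf, integral_add (integrable_const c) (hfi.const_mul α), integral_const,
      integral_const_mul, probReal_univ, one_smul]
  rw [hgf μ₁ h₁, hgf μ₂ h₂, add_sub_add_left_eq_sub, ← mul_sub, abs_mul, abs_of_pos hα]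
  exact mul_le_mul_of_nonneg_left (abs_integral_sub_le_vDist h₁ h₂ hf hfW) hα.le

end vDist

section Weight

variable {μ μ₁ μ₂ : Measure E} {V : E → ℝ} {β : ℝ}

lemma integrable_and_integral_le_of_lintegral_le (hV : Measurable V) (hV0 : ∀ x, 0 ≤ V x)
    {c : ℝ} (hc : 0 ≤ c) (h : ∫⁻ y, ENNReal.ofReal (V y) ∂μ ≤ ENNReal.ofReal c) :
    Integrable V μ ∧ ∫ y, V y ∂μ ≤ c := by
  refine ⟨⟨hV.aestronglyMeasurable, ?_⟩, ?_⟩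
  · rw [hasFiniteIntegral_iff_ofReal (.of_forall hV0)]
    exact h.trans_lt ENNReal.ofReal_lt_top
  · rw [integral_eq_lintegral_of_nonneg_ae (.of_forall hV0) hV.aestronglyMeasurable]
    exact ENNReal.toReal_le_of_le_ofReal hc h

lemma lintegral_ofReal_mul_le {g : E → ℝ} {c M : ℝ} (hc : 0 ≤ c)
    (h : ∫⁻ x, ENNReal.ofReal (g x) ∂μ ≤ ENNReal.ofReal M) :
    ∫⁻ x, ENNReal.ofReal (c * g x) ∂μ ≤ ENNReal.ofReal (c * M) := by
  simp_rw [ENNReal.ofReal_mul hc]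
  rw [lintegral_const_mul' _ _ ENNReal.ofReal_ne_top]
  gcongr

lemma lintegral_ofReal_affine [IsProbabilityMeasure μ] {lam b : ℝ} (hV : Measurable V)
    (hV0 : ∀ x, 0 ≤ V x) (hlam : 0 ≤ lam) (hb : 0 ≤ b) :
    ∫⁻ y, ENNReal.ofReal (lam * V y + b) ∂μ =
      ENNReal.ofReal lam * ∫⁻ y, ENNReal.ofReal (V y) ∂μ + ENNReal.ofReal b := by
  simp_rw [ENNReal.ofReal_add (mul_nonneg hlam (hV0 _)) hb, ENNReal.ofReal_mul hlam]
  rw [lintegral_add_right _ measurable_const, lintegral_const_mul _ hV.ennreal_ofReal,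
    lintegral_const, measure_univ, mul_one]

lemma integrable_one_add_mul [IsFiniteMeasure μ] (hV : Integrable V μ) :
    Integrable (fun x => 1 + β * V x) μ :=
  (integrable_const 1).add (hV.const_mul β)

lemma integral_one_add_mul [IsProbabilityMeasure μ] (hV : Integrable V μ) :
    ∫ x, (1 + β * V x) ∂μ = 1 + β * ∫ x, V x ∂μ := by
  rw [integral_add (integrable_const 1) (hV.const_mul β), integral_const, integral_const_mul,
    probReal_univ, one_smul]

lemma integrable_and_integral_one_add_mul_le [IsProbabilityMeasure μ] (hV : Measurable V)
    (hV0 : ∀ x, 0 ≤ V x) {K c : ℝ} (hβ : 0 ≤ β) (hK : 1 ≤ K)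
    (hc : 0 ≤ c) (h : ∫⁻ y, ENNReal.ofReal (V y) ∂μ ≤ ENNReal.ofReal (K * c)) :
    Integrable (fun x => 1 + β * V x) μ ∧ ∫ y, (1 + β * V y) ∂μ ≤ K * (1 + β * c) := by
  obtain ⟨hVi, hVle⟩ := integrable_and_integral_le_of_lintegral_le hV hV0 (by positivity) h
  refine ⟨integrable_one_add_mul hVi, ?_⟩
  rw [integral_one_add_mul hVi]
  nlinarith [mul_le_mul_of_nonneg_left hVle hβ]

lemma vDist_one_add_mul_le (hβ : 0 ≤ β) (hV1 : ∀ x, 1 ≤ V x) (h₁ : Integrable V μ₁)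
    (h₂ : Integrable V μ₂) :
    vDist (fun x => 1 + β * V x) μ₁ μ₂ ≤ (1 + β) * vDist V μ₁ μ₂ :=
  vDist_le_mul_vDist (by positivity) (fun x => by nlinarith [hV1 x]) h₁ h₂

lemma vDist_le_inv_mul_vDist_one_add_mul [IsFiniteMeasure μ₁] [IsFiniteMeasure μ₂]
    (hβ : 0 < β) (h₁ : Integrable V μ₁) (h₂ : Integrable V μ₂) :
    vDist V μ₁ μ₂ ≤ β⁻¹ * vDist (fun x => 1 + β * V x) μ₁ μ₂ :=
  vDist_le_mul_vDist (inv_pos.2 hβ) (fun x => by rw [inv_mul_eq_div, le_div_iff₀ hβ]; linarith)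
    (integrable_one_add_mul h₁) (integrable_one_add_mul h₂)

end Weight

section Kernel

variable {κ : Kernel E E} {μ : Measure E} {V : E → ℝ}

lemma integral_comp_eq_integral_integral [IsSFiniteKernel κ] [SFinite μ] {f : E → ℝ}
    (hf : Integrable f (κ ∘ₘ μ)) : ∫ y, f y ∂(κ ∘ₘ μ) = ∫ x, ∫ y, f y ∂κ x ∂μ := by
  rw [Measure.comp_eq_comp_const_apply] at hf ⊢
  rw [Kernel.integral_comp hf]
  simp

lemma integrable_comp_of_integral_le [IsSFiniteKernel κ] [IsFiniteMeasure μ]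
    (hV : Measurable V) (hV0 : ∀ x, 0 ≤ V x) (hκV : ∀ x, Integrable V (κ x)) {a b : ℝ}
    (hle : ∀ x, ∫ y, V y ∂κ x ≤ a * V x + b) (hμ : Integrable V μ) :
    Integrable V (κ ∘ₘ μ) := by
  rw [Measure.integrable_comp_iff hV.aestronglyMeasurable]
  refine ⟨.of_forall hκV, ?_⟩
  simp only [Real.norm_eq_abs, abs_of_nonneg (hV0 _)]
  refine ((hμ.const_mul a).add (integrable_const b)).mono'
    hV.stronglyMeasurable.integral_kernel.aestronglyMeasurable (.of_forall fun x => ?_)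
  rw [Real.norm_eq_abs, abs_of_nonneg (integral_nonneg hV0)]
  exact hle x

instance isMarkovKernel_pow [IsMarkovKernel κ] : ∀ n : ℕ, IsMarkovKernel (κ ^ n)
  | 0 => by rw [pow_zero]; exact inferInstanceAs (IsMarkovKernel Kernel.id)
  | n + 1 => by
    have : IsMarkovKernel (κ ^ n) := isMarkovKernel_pow n
    exact inferInstanceAs (IsMarkovKernel ((κ ^ n) ∘ₖ κ))

lemma ProbabilityTheory.Kernel.Invariant.pow (hκ : κ.Invariant μ) :
    ∀ n : ℕ, (κ ^ n).Invariant μ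
  | 0 => Measure.id_comp (μ := μ)
  | n + 1 => (hκ.pow n).comp hκ

lemma pow_succ_comp (κ : Kernel E E) (n : ℕ) (μ : Measure E) :
    ⇑(κ ^ (n + 1)) ∘ₘ μ = κ ∘ₘ (⇑(κ ^ n) ∘ₘ μ) := by
  rw [Measure.comp_assoc, pow_succ']
  rfl

lemma seqStep_replicate {Q : ℝ → E → Measure E} {w : ℝ} (hκ : ⇑κ = Q w) :
    ∀ n, seqStep Q (List.replicate n w) = ⇑(κ ^ n)
  | 0 => by funext x; exact (Kernel.id_apply x).symm
  | n + 1 => by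
    funext x
    rw [List.replicate_succ, seqStep, seqStep_replicate hκ n, pow_succ]
    exact (congrArg (Measure.bind · _) (congrFun hκ x)).symm

lemma vDist_le_div_of_invariant {W : E → ℝ} {π : Measure E} (hπ : κ.Invariant π)
    (hμ : Integrable W μ) (hκμ : Integrable W (κ ∘ₘ μ)) (hπW : Integrable W π) {α : ℝ} (hα : α < 1)
    (hcontr : vDist W (κ ∘ₘ μ) (κ ∘ₘ π) ≤ α * vDist W μ π) :
    vDist W μ π ≤ vDist W μ (κ ∘ₘ μ) / (1 - α) := by
  have htri := vDist_triangle hμ hκμ hπW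
  rw [hπ.def] at hcontr
  rw [le_div_iff₀ (by linarith)]
  linarith

end Kernel

section Drift

variable {κ : Kernel E E} [IsMarkovKernel κ] {V : E → ℝ} {lam b : ℝ}

lemma lintegral_pow_le_of_drift (hV : Measurable V) (hV0 : ∀ x, 0 ≤ V x) (hlam : 0 ≤ lam)
    (hb : 0 ≤ b) (hdrift : ∀ x, ∫⁻ y, ENNReal.ofReal (V y) ∂κ x ≤ ENNReal.ofReal (lam * V x + b))
    {c : ℝ} (hc0 : 0 ≤ c) (hc : lam * c + b ≤ c) :
    ∀ n x, ∫⁻ y, ENNReal.ofReal (V y) ∂(κ ^ n) x ≤ ENNReal.ofReal (lam ^ n * V x + c)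
  | 0, x => by
    rw [pow_zero, show ((1 : Kernel E E) x) = Measure.dirac x from Kernel.id_apply x,
      lintegral_dirac' x hV.ennreal_ofReal]
    exact ENNReal.ofReal_le_ofReal (by linarith)
  | n + 1, x => by
    have hn := lintegral_pow_le_of_drift hV hV0 hlam hb hdrift hc0 hc n x
    calc ∫⁻ y, ENNReal.ofReal (V y) ∂(κ ^ (n + 1)) x
        = ∫⁻ z, ∫⁻ y, ENNReal.ofReal (V y) ∂κ z ∂(κ ^ n) x := by
          rw [pow_succ']
          exact Kernel.lintegral_comp _ _ _ hV.ennreal_ofReal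
      _ ≤ ∫⁻ z, ENNReal.ofReal (lam * V z + b) ∂(κ ^ n) x := lintegral_mono hdrift
      _ ≤ ENNReal.ofReal lam * ENNReal.ofReal (lam ^ n * V x + c) + ENNReal.ofReal b := by
          rw [lintegral_ofReal_affine hV hV0 hlam hb]
          gcongr
      _ ≤ ENNReal.ofReal (lam ^ (n + 1) * V x + c) := by
          rw [← ENNReal.ofReal_mul hlam, ← ENNReal.ofReal_add
            (mul_nonneg hlam (by positivity [hV0 x])) hb]
          have hpow : lam ^ (n + 1) * V x = lam * (lam ^ n * V x) := by ring
          exact ENNReal.ofReal_le_ofReal (by linarith)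

-- Truncation is needed: `∫ V dπ ≤ lam ∫ V dπ + b` says nothing while `∫ V dπ` may be infinite.
lemma lintegral_min_le_of_drift_of_invariant {π : Measure E} [IsProbabilityMeasure π]
    (hπ : κ.Invariant π) (hV : Measurable V) (hV0 : ∀ x, 0 ≤ V x) (hlam0 : 0 ≤ lam)
    (hlam1 : lam < 1) (hb : 0 ≤ b)
    (hdrift : ∀ x, ∫⁻ y, ENNReal.ofReal (V y) ∂κ x ≤ ENNReal.ofReal (lam * V x + b)) (N : ℕ) :
    ∫⁻ x, min (ENNReal.ofReal (V x)) N ∂π ≤ ENNReal.ofReal (b / (1 - lam)) := by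
  set c := b / (1 - lam)
  have hc0 : 0 ≤ c := div_nonneg hb (by linarith)
  have hc : lam * c + b = c := by
    simp only [c]
    field_simp [show 1 - lam ≠ 0 by linarith]
    ring
  have hle (n : ℕ) : ∫⁻ x, min (ENNReal.ofReal (V x)) N ∂π ≤
      ∫⁻ x, min (ENNReal.ofReal (lam ^ n * V x + c)) N ∂π := by
    conv_lhs => rw [← hπ.pow n]
    rw [Measure.lintegral_bind (Kernel.aemeasurable _)
      (hV.ennreal_ofReal.min measurable_const).aemeasurable]
    refine lintegral_mono fun x => le_min ?_ ?_
    · exact (lintegral_mono fun y => min_le_left _ _).trans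
        (lintegral_pow_le_of_drift hV hV0 hlam0 hb hdrift hc0 hc.le n x)
    · exact (lintegral_mono fun y => min_le_right _ _).trans
        (by rw [lintegral_const, measure_univ, mul_one])
  have hlim : Tendsto (fun n => ∫⁻ x, min (ENNReal.ofReal (lam ^ n * V x + c)) N ∂π) atTop
      (nhds (∫⁻ x, min (ENNReal.ofReal c) N ∂π)) := by
    refine tendsto_lintegral_of_dominated_convergence (μ := π) (fun _ => (N : ℝ≥0∞))
      (fun n => ((hV.const_mul _).add_const c).ennreal_ofReal.min measurable_const)
      (fun n => .of_forall fun x => min_le_right _ _) (by simp) (.of_forall fun x => ?_)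
    have hpow := tendsto_pow_atTop_nhds_zero_of_lt_one hlam0 hlam1
    refine (ENNReal.tendsto_ofReal ?_).min tendsto_const_nhds
    simpa using (hpow.mul_const (V x)).add_const c
  calc ∫⁻ x, min (ENNReal.ofReal (V x)) N ∂π
      ≤ ∫⁻ x, min (ENNReal.ofReal c) N ∂π := ge_of_tendsto hlim (.of_forall hle)
    _ ≤ ∫⁻ _, ENNReal.ofReal c ∂π := lintegral_mono fun _ => min_le_left _ _
    _ = ENNReal.ofReal c := by simp

lemma lintegral_le_of_drift_of_invariant {π : Measure E} [IsProbabilityMeasure π]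
    (hπ : κ.Invariant π) (hV : Measurable V) (hV0 : ∀ x, 0 ≤ V x) (hlam0 : 0 ≤ lam)
    (hlam1 : lam < 1) (hb : 0 ≤ b)
    (hdrift : ∀ x, ∫⁻ y, ENNReal.ofReal (V y) ∂κ x ≤ ENNReal.ofReal (lam * V x + b)) :
    ∫⁻ x, ENNReal.ofReal (V x) ∂π ≤ ENNReal.ofReal (b / (1 - lam)) := by
  have hsup (x : E) : ENNReal.ofReal (V x) = ⨆ N : ℕ, min (ENNReal.ofReal (V x)) N := by
    rw [← inf_iSup_eq, ENNReal.iSup_natCast, inf_top_eq]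
  rw [lintegral_congr hsup, lintegral_iSup (fun N => hV.ennreal_ofReal.min measurable_const)
    (fun _ _ h x => min_le_min le_rfl (by exact_mod_cast h))]
  exact iSup_le
    (lintegral_min_le_of_drift_of_invariant hπ hV hV0 hlam0 hlam1 hb hdrift)

end Drift

section Harris

structure DriftMinorization (P : Kernel E E) (V : E → ℝ) (lam b η R : ℝ) (ν : Measure E) :
    Prop where
  drift : ∀ x, ∫⁻ y, ENNReal.ofReal (V y) ∂P x ≤ ENNReal.ofReal (lam * V x + b)
  minor : ∀ x, V x ≤ R → ENNReal.ofReal η • ν ≤ P x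

/-- `small` and `large` are what the two-point estimate `DriftMinorization.integral_sub_integral_le`
needs for pairs of points of `{V ≤ R}` and for the other pairs respectively. -/
structure HarrisConstants (lam b η R β α : ℝ) : Prop where
  lam_nonneg : 0 ≤ lam
  b_nonneg : 0 ≤ b
  η_nonneg : 0 ≤ η
  β_pos : 0 < β
  α_pos : 0 < α
  α_lt_one : α < 1
  small : 1 - η + β * (lam * R + b) ≤ α
  large : 2 + β * (lam * R + 2 * b) ≤ α * (2 + β * R)
  lam_le : lam ≤ α

lemma abs_integral_sub_mul_integral_le {μ ν : Measure E} [IsFiniteMeasure μ]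
    [IsProbabilityMeasure ν] {η : ℝ} (hη : 0 ≤ η) (hle : ENNReal.ofReal η • ν ≤ μ)
    {f w : E → ℝ} (hf : AEStronglyMeasurable f μ) (hfw : ∀ x, |f x| ≤ w x) (hw1 : ∀ x, 1 ≤ w x)
    (hw : Integrable w μ) :
    |(∫ x, f x ∂μ) - η * ∫ x, f x ∂ν| ≤ (∫ x, w x ∂μ) - η := by
  have := Measure.smul_finite ν (ENNReal.ofReal_ne_top (r := η))
  set σ := μ - ENNReal.ofReal η • ν
  have hμ : σ + ENNReal.ofReal η • ν = μ := Measure.sub_add_cancel_of_le hle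
  have hsplit : ∀ g : E → ℝ, Integrable g μ →
      Integrable g σ ∧ ∫ x, g x ∂μ = (∫ x, g x ∂σ) + η * ∫ x, g x ∂ν := fun g hg => by
    rw [← hμ] at hg ⊢
    obtain ⟨hgσ, hgν⟩ := integrable_add_measure.1 hg
    rw [integral_add_measure hgσ hgν, integral_smul_measure, ENNReal.toReal_ofReal hη,
      smul_eq_mul]
    exact ⟨hgσ, rfl⟩
  have hfi : Integrable f μ := hw.mono' hf (.of_forall hfw)
  obtain ⟨-, hfμ⟩ := hsplit f hfi
  obtain ⟨hwσ, hwμ⟩ := hsplit w hw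
  have hwν : η ≤ η * ∫ x, w x ∂ν := by
    rcases hη.eq_or_lt with rfl | hη'
    · simp
    have hwν : Integrable w ν := by
      refine (integrable_smul_measure (c := ENNReal.ofReal η) (by simpa using hη')
        ENNReal.ofReal_ne_top).1 ?_
      exact (integrable_add_measure.1 (hμ ▸ hw)).2
    have h1 : (1 : ℝ) ≤ ∫ x, w x ∂ν := by
      simpa using integral_mono (integrable_const 1) hwν hw1
    nlinarith
  have hfσ : |∫ x, f x ∂σ| ≤ ∫ x, w x ∂σ :=
    norm_integral_le_of_norm_le (f := f) hwσ (.of_forall hfw)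
  rw [hfμ, add_sub_cancel_right]
  linarith

variable {P : Kernel E E} {V : E → ℝ} {lam b η R : ℝ} {ν : Measure E} {β α : ℝ}

lemma DriftMinorization.integrable_and_integral_le (hP : DriftMinorization P V lam b η R ν)
    (hV : Measurable V) (hV0 : ∀ x, 0 ≤ V x) (hlam : 0 ≤ lam) (hb : 0 ≤ b) (x : E) :
    Integrable V (P x) ∧ ∫ y, V y ∂P x ≤ lam * V x + b :=
  integrable_and_integral_le_of_lintegral_le hV hV0 (by positivity [hV0 x]) (hP.drift x)

/-- The two-point estimate of Hairer–Mattingly. If `x, y ∈ {V ≤ R}`, the common part `η ν` of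
`P x` and `P y` cancels; otherwise `V x + V y ≥ R` and the drift alone suffices. -/
lemma DriftMinorization.integral_sub_integral_le [IsMarkovKernel P] [IsProbabilityMeasure ν]
    (hP : DriftMinorization P V lam b η R ν) (hc : HarrisConstants lam b η R β α)
    (hV : Measurable V) (hV0 : ∀ x, 0 ≤ V x) {f : E → ℝ} (hf : Measurable f)
    (hfW : ∀ x, |f x| ≤ 1 + β * V x) (x y : E) :
    (∫ z, f z ∂P x) - ∫ z, f z ∂P y ≤ α * ((1 + β * V x) + (1 + β * V y)) := by
  obtain ⟨hlam, hb, hη, hβ, -, -, hsmall, hlarge, hlamα⟩ := hc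
  replace hβ := hβ.le
  have hPV := hP.integrable_and_integral_le hV hV0 hlam hb
  have hW1 : ∀ z, 1 ≤ 1 + β * V z := fun z => by nlinarith [hV0 z]
  have hWi : ∀ z, Integrable (fun z => 1 + β * V z) (P z) := fun z =>
    integrable_one_add_mul (hPV z).1
  have hPW : ∀ z, ∫ w, (1 + β * V w) ∂P z ≤ 1 + β * (lam * V z + b) := fun z => by
    rw [integral_one_add_mul (hPV z).1]
    nlinarith [(hPV z).2]
  by_cases hxy : V x ≤ R ∧ V y ≤ R
  · have hsm : ∀ z, V z ≤ R →
        |(∫ w, f w ∂P z) - η * ∫ w, f w ∂ν| ≤ β * (lam * R + b) + 1 - η := fun z hz => by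
      refine (abs_integral_sub_mul_integral_le hη (hP.minor z hz) hf.aestronglyMeasurable
        hfW hW1 (hWi z)).trans ?_
      nlinarith [hPW z, mul_le_mul_of_nonneg_left hz (mul_nonneg hβ hlam)]
    have hx := abs_le.1 (hsm x hxy.1)
    have hy := abs_le.1 (hsm y hxy.2)
    nlinarith [hW1 x, hW1 y]
  · have hR : R ≤ V x + V y := by
      rcases not_and_or.1 hxy with h | h <;> linarith [hV0 x, hV0 y, not_le.1 h]
    have hfP : ∀ z, |∫ w, f w ∂P z| ≤ ∫ w, (1 + β * V w) ∂P z := fun z =>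
      norm_integral_le_of_norm_le (f := f) (hWi z) (.of_forall hfW)
    have hx := abs_le.1 (hfP x)
    have hy := abs_le.1 (hfP y)
    nlinarith [hPW x, hPW y, mul_le_mul_of_nonneg_right hlamα
      (mul_nonneg hβ (sub_nonneg.2 hR))]

lemma DriftMinorization.vDist_comp_le [IsMarkovKernel P] [IsProbabilityMeasure ν]
    (hP : DriftMinorization P V lam b η R ν) (hc : HarrisConstants lam b η R β α)
    (hV : Measurable V) (hV0 : ∀ x, 0 ≤ V x) {μ₁ μ₂ : Measure E} [IsProbabilityMeasure μ₁]
    [IsProbabilityMeasure μ₂] (h₁ : Integrable V μ₁) (h₂ : Integrable V μ₂) :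
    vDist (fun x => 1 + β * V x) (P ∘ₘ μ₁) (P ∘ₘ μ₂) ≤
      α * vDist (fun x => 1 + β * V x) μ₁ μ₂ := by
  have hPV := hP.integrable_and_integral_le hV hV0 hc.lam_nonneg hc.b_nonneg
  have hcomp : ∀ μ [IsProbabilityMeasure μ], Integrable V μ → Integrable V (P ∘ₘ μ) :=
    fun μ _ hμ => integrable_comp_of_integral_le hV hV0 (fun x => (hPV x).1)
      (fun x => (hPV x).2) hμ
  refine vDist_le (mul_nonneg hc.α_pos.le vDist_nonneg) fun f hf hfW => ?_
  have hfi : ∀ μ [IsProbabilityMeasure μ], Integrable V μ → Integrable f (P ∘ₘ μ) :=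
    fun μ _ hμ => (integrable_one_add_mul (hcomp μ hμ)).mono' hf.aestronglyMeasurable
      (.of_forall hfW)
  rw [integral_comp_eq_integral_integral (hfi μ₁ h₁),
    integral_comp_eq_integral_integral (hfi μ₂ h₂)]
  exact abs_integral_sub_le_mul_vDist (integrable_one_add_mul h₁) (integrable_one_add_mul h₂)
    hf.stronglyMeasurable.integral_kernel.measurable hc.α_pos
    (hP.integral_sub_integral_le hc hV hV0 hf hfW)

lemma DriftMinorization.vDist_le_div_of_invariant [IsMarkovKernel P] [IsProbabilityMeasure ν]
    (hP : DriftMinorization P V lam b η R ν) (hc : HarrisConstants lam b η R β α)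
    (hV : Measurable V) (hV0 : ∀ x, 0 ≤ V x) {μ π : Measure E} [IsProbabilityMeasure μ]
    [IsProbabilityMeasure π] (hπ : P.Invariant π) (hμ : Integrable V μ) (hπV : Integrable V π) :
    vDist (fun x => 1 + β * V x) μ π ≤
      vDist (fun x => 1 + β * V x) μ (P ∘ₘ μ) / (1 - α) := by
  have hPV := hP.integrable_and_integral_le hV hV0 hc.lam_nonneg hc.b_nonneg
  have hPμ : Integrable V (P ∘ₘ μ) :=
    integrable_comp_of_integral_le hV hV0 (fun x => (hPV x).1) (fun x => (hPV x).2) hμ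
  exact _root_.vDist_le_div_of_invariant hπ (integrable_one_add_mul hμ) (integrable_one_add_mul hPμ)
    (integrable_one_add_mul hπV) hc.α_lt_one (hP.vDist_comp_le hc hV hV0 hμ hπV)

lemma DriftMinorization.integrable_of_invariant [IsMarkovKernel P]
    (hP : DriftMinorization P V lam b η R ν) (hV : Measurable V) (hV0 : ∀ x, 0 ≤ V x)
    (hlam0 : 0 ≤ lam) (hlam1 : lam < 1) (hb : 0 ≤ b) {π : Measure E} [IsProbabilityMeasure π]
    (hπ : P.Invariant π) : Integrable V π :=
  (integrable_and_integral_le_of_lintegral_le hV hV0 (div_nonneg hb (by linarith))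
    (lintegral_le_of_drift_of_invariant hπ hV hV0 hlam0 hlam1 hb hP.drift)).1

lemma driftMinorization_pow {Q : ℝ → E → Measure E} {w : ℝ} (hP : ⇑P = Q w) {m : ℕ}
    (hdrift : ∀ x, ∫⁻ y, ENNReal.ofReal (V y) ∂(seqStep Q (List.ofFn fun _ : Fin m => w) x) ≤
      ENNReal.ofReal (lam * V x + b))
    (hminor : ∀ x, V x ≤ R → ∀ s : Set E,
      ENNReal.ofReal η * ν s ≤ seqStep Q (List.ofFn fun _ : Fin m => w) x s) :
    DriftMinorization (P ^ m) V lam b η R ν := by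
  simp only [List.ofFn_const, seqStep_replicate hP] at hdrift hminor
  exact ⟨hdrift, fun x hx => Measure.le_iff'.2 (hminor x hx)⟩

lemma exists_harrisConstants {lam b η R : ℝ} (hlam0 : 0 ≤ lam) (hlam1 : lam < 1) (hb : 0 < b)
    (hη : 0 < η) (hR : 2 * b / (1 - lam) < R) : ∃ β α, HarrisConstants lam b η R β α := by
  have h1lam : 0 < 1 - lam := by linarith
  have hRb : 2 * b < R * (1 - lam) := (div_lt_iff₀ h1lam).1 hR
  have hR0 : 0 < R := by nlinarith
  have hlamRb : 0 < lam * R + b := by positivity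
  -- `β` turns `small` into `1 - η / 2 ≤ α`, and `ρ` is the least `α` satisfying `large`.
  set β := η / (2 * (lam * R + b))
  have hβ : 0 < β := by positivity
  have hβR : 0 < 2 + β * R := by positivity
  set ρ := (2 + β * (lam * R + 2 * b)) / (2 + β * R)
  have hρ : ρ * (2 + β * R) = 2 + β * (lam * R + 2 * b) := div_mul_cancel₀ _ hβR.ne'
  refine ⟨β, max (1 - η / 2) ρ, hlam0, hb.le, hη.le, hβ, ?_, ?_, ?_, ?_, ?_⟩
  · exact lt_max_of_lt_right (by positivity)
  · refine max_lt (by linarith) ((div_lt_one hβR).2 ?_)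
    nlinarith
  · refine le_max_of_le_left (le_of_eq ?_)
    simp only [β]
    field_simp
    ring
  · nlinarith [le_max_right (1 - η / 2) ρ]
  · refine le_max_of_le_right ((le_div_iff₀ hβR).2 ?_)
    nlinarith

end Harris

section Perturbation

variable {W : E → ℝ} {κ κ' : Kernel E E} {K : ℝ}

lemma vDist_comp_le_mul_vDist [IsMarkovKernel κ] (hW : Measurable W) (hW0 : ∀ x, 0 ≤ W x)
    (hκW : ∀ x, Integrable W (κ x)) (hK : 0 < K) (hle : ∀ x, ∫ y, W y ∂κ x ≤ K * W x)
    {μ₁ μ₂ : Measure E} [IsProbabilityMeasure μ₁] [IsProbabilityMeasure μ₂]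
    (h₁ : Integrable W μ₁) (h₂ : Integrable W μ₂) :
    vDist W (κ ∘ₘ μ₁) (κ ∘ₘ μ₂) ≤ K * vDist W μ₁ μ₂ := by
  have hle' : ∀ x, ∫ y, W y ∂κ x ≤ K * W x + 0 := fun x => by simpa using hle x
  refine vDist_le (mul_nonneg hK.le vDist_nonneg) fun f hf hfW => ?_
  have hfi : ∀ μ [IsProbabilityMeasure μ], Integrable W μ → Integrable f (κ ∘ₘ μ) :=
    fun μ _ hμ => (integrable_comp_of_integral_le hW hW0 hκW hle' hμ).mono'
      hf.aestronglyMeasurable (.of_forall hfW)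
  have hκf : ∀ x, |∫ y, f y ∂κ x| ≤ K * W x := fun x =>
    (norm_integral_le_of_norm_le (f := f) (hκW x) (.of_forall hfW)).trans (hle x)
  rw [integral_comp_eq_integral_integral (hfi μ₁ h₁),
    integral_comp_eq_integral_integral (hfi μ₂ h₂)]
  exact (abs_integral_sub_le_vDist (h₁.const_mul K) (h₂.const_mul K)
    hf.stronglyMeasurable.integral_kernel.measurable hκf).trans
    (vDist_le_mul_vDist hK (fun x => le_rfl) h₁ h₂)

lemma vDist_comp_comp_le [IsMarkovKernel κ] [IsMarkovKernel κ']
    (hκW : ∀ x, Integrable W (κ x)) (hκ'W : ∀ x, Integrable W (κ' x)) {μ : Measure E}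
    [IsProbabilityMeasure μ] (hκμ : Integrable W (κ ∘ₘ μ)) (hκ'μ : Integrable W (κ' ∘ₘ μ))
    {w : E → ℝ} (hw : ∀ x, vDist W (κ x) (κ' x) ≤ w x) {C : ℝ} (hC : 0 ≤ C)
    (hwC : ∫⁻ x, ENNReal.ofReal (w x) ∂μ ≤ ENNReal.ofReal C) :
    vDist W (κ ∘ₘ μ) (κ' ∘ₘ μ) ≤ C := by
  refine vDist_le hC fun f hf hfW => ?_
  have hfi : ∀ ρ, Integrable W ρ → Integrable f ρ := fun ρ hρ =>
    hρ.mono' hf.aestronglyMeasurable (.of_forall hfW)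
  have hint : ∀ ρ : Kernel E E, Integrable f (ρ ∘ₘ μ) →
      Integrable (fun x => ∫ y, f y ∂ρ x) μ := fun ρ hρ =>
    (Measure.integrable_integral_norm_of_integrable_comp hρ).mono'
      hf.stronglyMeasurable.integral_kernel.aestronglyMeasurable
      (.of_forall fun x => norm_integral_le_integral_norm (μ := ρ x) f)
  rw [integral_comp_eq_integral_integral (hfi _ hκμ), integral_comp_eq_integral_integral
    (hfi _ hκ'μ), ← integral_sub (hint κ (hfi _ hκμ)) (hint κ' (hfi _ hκ'μ))]
  refine (norm_integral_le_lintegral_norm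
    (fun x => (∫ y, f y ∂κ x) - ∫ y, f y ∂κ' x)).trans (ENNReal.toReal_le_of_le_ofReal hC ?_)
  refine (lintegral_mono fun x => ENNReal.ofReal_le_ofReal ?_).trans hwC
  exact (abs_integral_sub_le_vDist (hκW x) (hκ'W x) hf hfW).trans (hw x)

lemma integrable_pow_comp [IsMarkovKernel κ] (hW : Measurable W) (hW0 : ∀ x, 0 ≤ W x)
    (hκW : ∀ x, Integrable W (κ x)) (hle : ∀ x, ∫ y, W y ∂κ x ≤ K * W x) {μ : Measure E}
    [IsProbabilityMeasure μ] (hμ : Integrable W μ) : ∀ n, Integrable W (⇑(κ ^ n) ∘ₘ μ)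
  | 0 => by rw [pow_zero]; exact (Measure.id_comp (μ := μ)).symm ▸ hμ
  | n + 1 => by
    rw [pow_succ_comp]
    exact integrable_comp_of_integral_le hW hW0 hκW (b := 0) (by simpa using hle)
      (integrable_pow_comp hW hW0 hκW hle hμ n)

lemma vDist_pow_comp_le [IsMarkovKernel κ] (hW : Measurable W) (hW0 : ∀ x, 0 ≤ W x)
    (hκW : ∀ x, Integrable W (κ x)) (hK : 0 < K) (hle : ∀ x, ∫ y, W y ∂κ x ≤ K * W x)
    {μ : Measure E} [IsProbabilityMeasure μ] (hμ : Integrable W μ) :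
    ∀ n, vDist W μ (⇑(κ ^ n) ∘ₘ μ) ≤ (∑ i ∈ Finset.range n, K ^ i) * vDist W μ (κ ∘ₘ μ)
  | 0 => by
    rw [pow_zero, Finset.range_zero, Finset.sum_empty, zero_mul]
    exact vDist_le le_rfl fun f _ _ => by rw [show (1 : Kernel E E) ∘ₘ μ = μ from
      Measure.id_comp, sub_self, abs_zero]
  | n + 1 => by
    have hint := integrable_pow_comp hW hW0 hκW hle hμ
    have hn := vDist_pow_comp_le hW hW0 hκW hK hle hμ n
    rw [pow_succ_comp, geom_sum_succ]
    have hκμ : Integrable W (κ ∘ₘ μ) := by simpa using hint 1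
    have hκnμ : Integrable W (κ ∘ₘ (⇑(κ ^ n) ∘ₘ μ)) := by
      simpa [pow_succ_comp] using hint (n + 1)
    calc vDist W μ (κ ∘ₘ (⇑(κ ^ n) ∘ₘ μ))
        ≤ vDist W μ (κ ∘ₘ μ) + vDist W (κ ∘ₘ μ) (κ ∘ₘ (⇑(κ ^ n) ∘ₘ μ)) :=
          vDist_triangle hμ hκμ hκnμ
      _ ≤ vDist W μ (κ ∘ₘ μ) + K * vDist W μ (⇑(κ ^ n) ∘ₘ μ) := by
          gcongr
          exact vDist_comp_le_mul_vDist hW hW0 hκW hK hle hμ (hint n)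
      _ ≤ (K * ∑ i ∈ Finset.range n, K ^ i + 1) * vDist W μ (κ ∘ₘ μ) := by
          nlinarith [vDist_nonneg (W := W) (μ₁ := μ) (μ₂ := κ ∘ₘ μ)]

lemma vDist_pow_comp_le_of_invariant [IsMarkovKernel κ] [IsMarkovKernel κ'] {π : Measure E}
    [IsProbabilityMeasure π] (hπ : κ.Invariant π) (hW : Measurable W) (hW0 : ∀ x, 0 ≤ W x)
    (hκW : ∀ x, Integrable W (κ x)) (hκ'W : ∀ x, Integrable W (κ' x)) (hK : 0 < K)
    (hle : ∀ x, ∫ y, W y ∂κ' x ≤ K * W x) (hπW : Integrable W π) {w : E → ℝ}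
    (hw : ∀ x, vDist W (κ x) (κ' x) ≤ w x) {C : ℝ} (hC : 0 ≤ C)
    (hwC : ∫⁻ x, ENNReal.ofReal (w x) ∂π ≤ ENNReal.ofReal C) (n : ℕ) :
    vDist W π (⇑(κ' ^ n) ∘ₘ π) ≤ (∑ i ∈ Finset.range n, K ^ i) * C := by
  refine (vDist_pow_comp_le hW hW0 hκ'W hK hle hπW n).trans
    (mul_le_mul_of_nonneg_left ?_ (Finset.sum_nonneg fun i _ => by positivity))
  have hκ'π : Integrable W (κ' ∘ₘ π) := by simpa using integrable_pow_comp hW hW0 hκ'W hle hπW 1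
  calc vDist W π (κ' ∘ₘ π) = vDist W (κ ∘ₘ π) (κ' ∘ₘ π) := by rw [hπ.def]
    _ ≤ C := vDist_comp_comp_le hκW hκ'W (by rwa [hπ.def]) hκ'π hw hC hwC

lemma vDist_le_of_perturbation {V : E → ℝ} {lam b η R β α : ℝ} {ν : Measure E}
    [IsProbabilityMeasure ν] [IsMarkovKernel κ] [IsMarkovKernel κ'] {m : ℕ}
    (hP : DriftMinorization (κ' ^ m) V lam b η R ν) (hc : HarrisConstants lam b η R β α)
    (hV : Measurable V) (hV0 : ∀ x, 0 ≤ V x) {π π' : Measure E} [IsProbabilityMeasure π]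
    [IsProbabilityMeasure π'] (hπ : κ.Invariant π) (hπ' : κ'.Invariant π')
    (hπV : Integrable V π) (hπ'V : Integrable V π')
    (hκW : ∀ x, Integrable (fun x => 1 + β * V x) (κ x))
    (hκ'W : ∀ x, Integrable (fun x => 1 + β * V x) (κ' x)) (hK : 0 < K)
    (hle : ∀ x, ∫ y, (1 + β * V y) ∂κ' x ≤ K * (1 + β * V x)) {w : E → ℝ}
    (hw : ∀ x, vDist (fun x => 1 + β * V x) (κ x) (κ' x) ≤ w x) {C : ℝ} (hC : 0 ≤ C)
    (hwC : ∫⁻ x, ENNReal.ofReal (w x) ∂π ≤ ENNReal.ofReal C) :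
    vDist (fun x => 1 + β * V x) π π' ≤ (∑ i ∈ Finset.range m, K ^ i) * C / (1 - α) := by
  refine (hP.vDist_le_div_of_invariant hc hV hV0 (hπ'.pow m) hπV hπ'V).trans ?_
  gcongr
  · linarith [hc.α_lt_one]
  · exact vDist_pow_comp_le_of_invariant hπ (by fun_prop)
      (fun x => by nlinarith [hV0 x, hc.β_pos]) hκW hκ'W hK hle (integrable_one_add_mul hπV)
      hw hC hwC m

end Perturbation

theorem statement15_general
    {E : Type*} [MeasurableSpace E]
    (Q : ℝ → E → Measure E)
    (hQmeas : ∀ u, Measurable (Q u))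
    (hQprob : ∀ u x, IsProbabilityMeasure (Q u x))
    (V : E → ℝ) (hVmeas : Measurable V) (hV1 : ∀ x, 1 ≤ V x)
    -- Assumption F1
    (ε lam b K : ℝ) (m : ℕ)
    (hε : 0 < ε) (hlam : lam ∈ Set.Ioo (0:ℝ) 1) (hm : 1 ≤ m) (hb : 0 < b) (hK : 1 ≤ K)
    (hdrift1 : ∀ u ∈ Icc (0:ℝ) 1, ∀ x,
      (∫⁻ y, ENNReal.ofReal (V y) ∂(Q u x)) ≤ ENNReal.ofReal (K * V x))
    (hdriftm : ∀ u ∈ Icc (0:ℝ) 1, ∀ us : Fin m → ℝ,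
      (∀ i, us i ∈ Icc (0:ℝ) 1 ∧ |u - us i| ≤ ε) → ∀ x,
      (∫⁻ y, ENNReal.ofReal (V y) ∂(seqStep Q (List.ofFn us) x))
        ≤ ENNReal.ofReal (lam * V x + b))
    (η R : ℝ) (hη : 0 < η) (hR : 2 * b / (1 - lam) < R)
    (ν : Measure E) (hν : IsProbabilityMeasure ν)
    (hminor : ∀ u ∈ Icc (0:ℝ) 1, ∀ us : Fin m → ℝ,
      (∀ i, us i ∈ Icc (0:ℝ) 1 ∧ |u - us i| ≤ ε) → ∀ x, V x ≤ R →
      ∀ s : Set E, ENNReal.ofReal η * ν s ≤ seqStep Q (List.ofFn us) x s)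
    -- the invariant probabilities
    (π : ℝ → Measure E)
    (hπ : ∀ u ∈ Icc (0:ℝ) 1, IsProbabilityMeasure (π u) ∧ (π u).bind (Q u) = π u)
    -- Assumption F2
    (κ : ℝ)
    (Vt : E → ℝ)
    (hVtπ : ∃ M : ℝ, ∀ u ∈ Icc (0:ℝ) 1,
      (∫⁻ x, ENNReal.ofReal (Vt x) ∂(π u)) ≤ ENNReal.ofReal M)
    (hF2 : ∀ u ∈ Icc (0:ℝ) 1, ∀ v ∈ Icc (0:ℝ) 1, ∀ x,
      vDist V (Q u x) (Q v x) ≤ Vt x * |u - v| ^ κ) :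
    -- Hölder continuity of u ↦ π_u in V-norm
    ∃ C > (0:ℝ), ∀ u ∈ Icc (0:ℝ) 1, ∀ v ∈ Icc (0:ℝ) 1,
      vDist V (π u) (π v) ≤ C * |u - v| ^ κ := by
  obtain ⟨M, hM⟩ := hVtπ
  have hV0 : ∀ x, 0 ≤ V x := fun x => zero_le_one.trans (hV1 x)
  let P : ℝ → Kernel E E := fun w => ⟨Q w, hQmeas w⟩
  have (w : ℝ) : IsMarkovKernel (P w) := ⟨hQprob w⟩
  have hconst : ∀ w ∈ Icc (0:ℝ) 1, ∀ i : Fin m, w ∈ Icc (0:ℝ) 1 ∧ |w - w| ≤ ε :=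
    fun w hw _ => ⟨hw, by simpa using hε.le⟩
  have hDM : ∀ w ∈ Icc (0:ℝ) 1, DriftMinorization (P w ^ m) V lam b η R ν := fun w hw =>
    driftMinorization_pow rfl (hdriftm w hw _ (hconst w hw)) (hminor w hw _ (hconst w hw))
  have hinv (w : ℝ) (hw : w ∈ Icc (0:ℝ) 1) : (P w).Invariant (π w) := (hπ w hw).2
  have hπV : ∀ w ∈ Icc (0:ℝ) 1, Integrable V (π w) := fun w hw =>
    have := (hπ w hw).1
    (hDM w hw).integrable_of_invariant hVmeas hV0 hlam.1.le hlam.2 hb.le ((hinv w hw).pow m)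
  obtain ⟨β, α, hc⟩ := exists_harrisConstants hlam.1.le hlam.2 hb hη hR
  have hβ := hc.β_pos
  have hPV (w : ℝ) (hw : w ∈ Icc (0:ℝ) 1) (x : E) : Integrable V (P w x) :=
    (integrable_and_integral_le_of_lintegral_le hVmeas hV0 (by nlinarith [hV0 x])
      (hdrift1 w hw x)).1
  have hPW (w : ℝ) (hw : w ∈ Icc (0:ℝ) 1) (x : E) :=
    integrable_and_integral_one_add_mul_le hVmeas hV0 hβ.le hK (hV0 x) (hdrift1 w hw x)
  set S := ∑ i ∈ Finset.range m, K ^ i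
  have hS : 0 < S := Finset.sum_pos (fun i _ => by positivity) (by simp; omega)
  have h1α : 0 < 1 - α := sub_pos.2 hc.α_lt_one
  refine ⟨β⁻¹ * (S * ((1 + β) * max M 1) / (1 - α)), by positivity, fun u hu v hv => ?_⟩
  have := (hπ u hu).1
  have := (hπ v hv).1
  have hw (x : E) :
      vDist (fun x => 1 + β * V x) (P u x) (P v x) ≤ (1 + β) * |u - v| ^ κ * Vt x :=
    (vDist_one_add_mul_le hβ.le hV1 (hPV u hu x) (hPV v hv x)).trans <|
      (mul_le_mul_of_nonneg_left (hF2 u hu v hv x) (by positivity)).trans_eq (by ring)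
  have hwC : ∫⁻ x, ENNReal.ofReal ((1 + β) * |u - v| ^ κ * Vt x) ∂π u ≤
      ENNReal.ofReal ((1 + β) * |u - v| ^ κ * max M 1) :=
    lintegral_ofReal_mul_le (by positivity)
      ((hM u hu).trans (ENNReal.ofReal_le_ofReal (le_max_left M 1)))
  calc vDist V (π u) (π v) ≤ β⁻¹ * vDist (fun x => 1 + β * V x) (π u) (π v) :=
        vDist_le_inv_mul_vDist_one_add_mul hβ (hπV u hu) (hπV v hv)
    _ ≤ β⁻¹ * (S * ((1 + β) * |u - v| ^ κ * max M 1) / (1 - α)) := by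
        gcongr
        exact vDist_le_of_perturbation (hDM v hv) hc hVmeas hV0 (hinv u hu) (hinv v hv)
          (hπV u hu) (hπV v hv) (fun x => (hPW u hu x).1) (fun x => (hPW v hv x).1)
          (by linarith) (fun x => (hPW v hv x).2) hw (by positivity) hwC
    _ = β⁻¹ * (S * ((1 + β) * max M 1) / (1 - α)) * |u - v| ^ κ := by ring

theorem statement15
    {E : Type*} [MeasurableSpace E]
    (Q : ℝ → E → Measure E)
    (hQmeas : ∀ u, Measurable (Q u))
    (hQprob : ∀ u x, IsProbabilityMeasure (Q u x))
    (V : E → ℝ) (hVmeas : Measurable V) (hV1 : ∀ x, 1 ≤ V x)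
    -- Assumption F1
    (ε lam b K : ℝ) (m : ℕ)
    (hε : 0 < ε) (hlam : lam ∈ Set.Ioo (0:ℝ) 1) (hm : 1 ≤ m) (hb : 0 < b) (hK : 1 ≤ K)
    (hdrift1 : ∀ u ∈ Icc (0:ℝ) 1, ∀ x,
      (∫⁻ y, ENNReal.ofReal (V y) ∂(Q u x)) ≤ ENNReal.ofReal (K * V x))
    (hdriftm : ∀ u ∈ Icc (0:ℝ) 1, ∀ us : Fin m → ℝ,
      (∀ i, us i ∈ Icc (0:ℝ) 1 ∧ |u - us i| ≤ ε) → ∀ x,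
      (∫⁻ y, ENNReal.ofReal (V y) ∂(seqStep Q (List.ofFn us) x))
        ≤ ENNReal.ofReal (lam * V x + b))
    (η R : ℝ) (hη : 0 < η) (hR : 2 * b / (1 - lam) < R)
    (ν : Measure E) (hν : IsProbabilityMeasure ν)
    (hminor : ∀ u ∈ Icc (0:ℝ) 1, ∀ us : Fin m → ℝ,
      (∀ i, us i ∈ Icc (0:ℝ) 1 ∧ |u - us i| ≤ ε) → ∀ x, V x ≤ R →
      ∀ s : Set E, ENNReal.ofReal η * ν s ≤ seqStep Q (List.ofFn us) x s)
    -- the invariant probabilities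
    (π : ℝ → Measure E)
    (hπ : ∀ u ∈ Icc (0:ℝ) 1, IsProbabilityMeasure (π u) ∧ (π u).bind (Q u) = π u)
    -- Assumption F2
    (κ : ℝ) (hκ : κ ∈ Set.Ioo (0:ℝ) 1)
    (Vt : E → ℝ) (hVt : ∀ x, 0 < Vt x)
    (hVtπ : ∃ M : ℝ, ∀ u ∈ Icc (0:ℝ) 1,
      (∫⁻ x, ENNReal.ofReal (Vt x) ∂(π u)) ≤ ENNReal.ofReal M)
    (hF2 : ∀ u ∈ Icc (0:ℝ) 1, ∀ v ∈ Icc (0:ℝ) 1, ∀ x,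
      vDist V (Q u x) (Q v x) ≤ Vt x * |u - v| ^ κ) :
    -- Hölder continuity of u ↦ π_u in V-norm
    ∃ C > (0:ℝ), ∀ u ∈ Icc (0:ℝ) 1, ∀ v ∈ Icc (0:ℝ) 1,
      vDist V (π u) (π v) ≤ C * |u - v| ^ κ :=
  statement15_general Q hQmeas hQprob V hVmeas hV1 ε lam b K m hε hlam hm hb hK hdrift1 hdriftm η R
    hη hR ν hν hminor π hπ κ Vt hVtπ hF2

end
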